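/- If every graph on 36 vertices contains a clique of size 4 or an independent set of size 6, and every graph on 41 vertices contains a clique of size 5 or an independent set of size 5, then any graph G on 58 vertices with no 5-clique and no 6-independent set satisfies: every vertex has degree at most 35 and degree at least 17. -/

import Mathlib

open SimpleGraph Finset

lemma comap_clique {n : ℕ} {α β : Type*} {G : SimpleGraph β} (f : α ↪ β)
    {t : Finset α} (h : (G.comap f).IsNClique n t) : G.IsNClique n (t.map f) := by
  constructor
  · rintro x hx y hy hxy
    simp only [Finset.coe_map, Set.mem_image, Finset.mem_coe] at hx hy
    obtain ⟨a, ha, rfl⟩ := hx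
    obtain ⟨b, hb, rfl⟩ := hy
    exact h.1 ha hb (fun e => hxy (by rw [e]))
  · rw [Finset.card_map]; exact h.2

lemma comap_compl {α β : Type*} {G : SimpleGraph β} (f : α ↪ β) :
    (G.comap f)ᶜ = Gᶜ.comap f := by
  ext a b
  simp only [compl_adj, comap_adj, ne_eq, f.injective.ne_iff]

theorem stmt5
    (hR46 : ∀ H : SimpleGraph (Fin 36), ¬ H.CliqueFree 4 ∨ ¬ Hᶜ.CliqueFree 6)
    (hR55 : ∀ H : SimpleGraph (Fin 41), ¬ H.CliqueFree 5 ∨ ¬ Hᶜ.CliqueFree 5)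
    (G : SimpleGraph (Fin 58)) [DecidableRel G.Adj]
    (h5 : G.CliqueFree 5) (h6 : Gᶜ.CliqueFree 6) :
    ∀ v : Fin 58, G.degree v ≤ 35 ∧ 17 ≤ G.degree v := by
  intro v
  constructor
  · -- degree ≤ 35
    by_contra hlt
    push_neg at hlt
    have hcard : 36 ≤ (G.neighborFinset v).card := by
      rw [G.card_neighborFinset_eq_degree]; omega
    obtain ⟨g⟩ : Nonempty (Fin 36 ↪ (G.neighborFinset v : Finset (Fin 58))) := by
      rw [Function.Embedding.nonempty_iff_card_le, Fintype.card_fin, Fintype.card_coe]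
      exact hcard
    set f : Fin 36 ↪ Fin 58 := g.trans (Function.Embedding.subtype _)
    have hmem : ∀ i, f i ∈ G.neighborFinset v := fun i => (g i).2
    set H := G.comap f
    rcases hR46 H with h | h
    · apply h
      intro t ht
      have h1 : G.IsNClique 4 (t.map f) := comap_clique f ht
      have h2 : G.IsNClique 5 (insert v (t.map f)) :=
        h1.insert (fun b hb => by
          obtain ⟨a, _, rfl⟩ := Finset.mem_map.mp hb
          exact (G.mem_neighborFinset v (f a)).mp (hmem a))
      exact h5 _ h2
    · apply h
      rw [comap_compl f]
      exact h6.comap (SimpleGraph.Embedding.comap f Gᶜ).isContained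
  · -- 17 ≤ degree
    by_contra hlt
    push_neg at hlt
    set s : Finset (Fin 58) := ((G.neighborFinset v)ᶜ).erase v with hs
    have hcard : 41 ≤ s.card := by
      have h1 : (G.neighborFinset v)ᶜ.card = 58 - G.degree v := by
        rw [Finset.card_compl, G.card_neighborFinset_eq_degree]; simp
      have hv : v ∈ (G.neighborFinset v)ᶜ := by
        simp [Finset.mem_compl]
      rw [hs, Finset.card_erase_of_mem hv, h1]
      omega
    obtain ⟨g⟩ : Nonempty (Fin 41 ↪ (s : Finset (Fin 58))) := by
      rw [Function.Embedding.nonempty_iff_card_le, Fintype.card_fin, Fintype.card_coe]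
      exact hcard
    set f : Fin 41 ↪ Fin 58 := g.trans (Function.Embedding.subtype _)
    have hmem : ∀ i, f i ∈ s := fun i => (g i).2
    set H := G.comap f
    rcases hR55 H with h | h
    · exact h (h5.comap (SimpleGraph.Embedding.comap f G).isContained)
    · apply h
      rw [comap_compl f]
      intro t ht
      have h1 : Gᶜ.IsNClique 5 (t.map f) := comap_clique f ht
      have h2 : Gᶜ.IsNClique 6 (insert v (t.map f)) :=
        h1.insert (fun b hb => by
          obtain ⟨a, _, rfl⟩ := Finset.mem_map.mp hb
          have := hmem a
          rw [hs, Finset.mem_erase, Finset.mem_compl, G.mem_neighborFinset] at this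
          exact ⟨this.1.symm, fun hadj => this.2 hadj⟩)
      exact h6 _ h2
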